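/- arXiv:0711.3403 — 2 statements merged into one kernel-verified Lean document; each statement's English description precedes it below -/
import Mathlib

section
/- Let k ≥ 1 be an integer and let f : ℝ³ → ℝ³ be a Schwartz function. Then ∫_{ℝ³} ⟨D^k((y·∇)f)(y), D^k f(y)⟩ dy = (k − 3/2)·‖D^k f‖_{L²(ℝ³)}², where D^k g denotes the k-th iterated (total) derivative of g (a tensor-valued function), ⟨·,·⟩ the pointwise inner product of such tensors, ‖D^k f‖_{L²}² = ∫_{ℝ³} |D^k f(y)|² dy, and (y·∇)f(y) = Σ_{j=1}^{3} y_j ∂_j f(y). -/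
/-!
The Euler operator `Λ f (y) = (y · ∇) f (y) = Df(y) y` satisfies `∂_v Λ = Λ ∂_v + ∂_v`, by
symmetry of the second derivative; hence `∂^m Λ f = Λ ∂^m f + k ∂^m f` for `k` directions `m`.
For a continuous linear functional `ℓ`, integrating by parts in direction `v` against `ℓ • u`
gives `∫ ℓ ⟪∂_v u, u⟫ = -(ℓ v / 2) ∫ ⟪u, u⟫`; writing `Du(y) y = ∑ᵢ ℓᵢ(y) ∂_{bᵢ} u(y)` in a
basis with dual coordinates `ℓᵢ` yields `∫ ⟪Λ u, u⟫ = -(d / 2) ∫ ⟪u, u⟫` in dimension `d`.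
Applying this to `u = ∂^m f` for every `k`-tuple of coordinate directions gives `k - 3/2`.
-/

open MeasureTheory Set RealInnerProductSpace

noncomputable section

abbrev E3 := EuclideanSpace ℝ (Fin 3)

/-- The pointwise (Hilbert–Schmidt/Euclidean) inner product of two `k`-tensor valued
quantities, i.e. of two `k`-multilinear maps on `ℝ³` with values in `ℝ³`: the sum, over all
`k`-tuples of coordinate directions, of the inner products of the corresponding entries. -/
noncomputable def tInner3 (k : ℕ)
    (A B : ContinuousMultilinearMap ℝ (fun _ : Fin k => E3) E3) : ℝ :=
  ∑ e : Fin k → Fin 3,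
    ⟪A (fun i => EuclideanSpace.single (e i) 1), B (fun i => EuclideanSpace.single (e i) 1)⟫

namespace SchwartzMap

open LineDeriv

variable {E : Type*} [NormedAddCommGroup E] [NormedSpace ℝ E]

section Euler

variable {F : Type*} [NormedAddCommGroup F] [NormedSpace ℝ F]

def euler : 𝓢(E, F) →L[ℝ] 𝓢(E, F) :=
  bilinLeftCLM (.id ℝ (E →L[ℝ] F)) (ContinuousLinearMap.id ℝ E).hasTemperateGrowth ∘L
    fderivCLM ℝ E F

theorem euler_apply (f : 𝓢(E, F)) (x : E) : euler f x = fderiv ℝ f x x := rfl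

theorem lineDerivOp_euler (v : E) (f : 𝓢(E, F)) :
    ∂_{v} (euler f) = euler (∂_{v} f) + ∂_{v} f := by
  ext x
  have hDf : ∀ y, HasFDerivAt (fderiv ℝ f) (fderiv ℝ (fderiv ℝ f) y) y := fun y =>
    (fderivCLM ℝ E F f).hasFDerivAt y
  have hsymm : IsSymmSndFDerivAt ℝ f x :=
    (f.smooth ⊤).contDiffAt.isSymmSndFDerivAt (by simp; exact WithTop.coe_le_coe.mpr le_top)
  have hdiag : HasFDerivAt (fun y => fderiv ℝ f y y)
      ((fderiv ℝ f x).comp (.id ℝ E) + (fderiv ℝ (fderiv ℝ f) x).flip x) x :=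
    (hDf x).clm_apply (hasFDerivAt_id x)
  have hdir : HasFDerivAt (fun y => fderiv ℝ f y v) ((fderiv ℝ (fderiv ℝ f) x).flip v) x := by
    simpa using (hDf x).clm_apply (hasFDerivAt_const v x)
  change fderiv ℝ (fun y => fderiv ℝ f y y) x v =
    fderiv ℝ (fun y => fderiv ℝ f y v) x x + fderiv ℝ f x v
  rw [hdir.fderiv, hdiag.fderiv]
  simp [hsymm.eq x v, add_comm]

theorem iteratedLineDerivOp_euler {n : ℕ} (m : Fin n → E) (f : 𝓢(E, F)) :
    ∂^{m} (euler f) = euler (∂^{m} f) + n • ∂^{m} f := by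
  induction n generalizing f with
  | zero => simp
  | succ n ih =>
    rw [iteratedLineDerivOp_succ_left, ih, lineDerivOp_add, lineDerivOp_euler,
      ← Nat.cast_smul_eq_nsmul ℝ, lineDerivOp_smul, ← iteratedLineDerivOp_succ_left,
      Nat.cast_smul_eq_nsmul, succ_nsmul]
    abel

theorem lineDerivOp_smulLeftCLM (ℓ : E →L[ℝ] ℝ) (v : E) (u : 𝓢(E, F)) :
    ∂_{v} (smulLeftCLM F ℓ u) = ℓ v • u + smulLeftCLM F ℓ (∂_{v} u) := by
  ext x
  have hℓ := ℓ.hasTemperateGrowth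
  change fderiv ℝ (smulLeftCLM F ℓ u) x v = _
  rw [smulLeftCLM_apply hℓ, add_apply, smul_apply, smulLeftCLM_apply_apply hℓ,
    lineDerivOp_apply_eq_fderiv, fderiv_fun_smul ℓ.differentiableAt u.differentiableAt]
  simp [add_comm]

theorem euler_apply_eq_sum {ι : Type*} [Fintype ι] (b : Module.Basis ι ℝ E) (u : 𝓢(E, F))
    (x : E) : euler u x = ∑ i, b.repr x i • ∂_{b i} u x := by
  calc euler u x = fderiv ℝ u x (∑ i, b.repr x i • b i) := by rw [b.sum_repr, euler_apply]
    _ = _ := by simp only [map_sum, map_smul, lineDerivOp_apply_eq_fderiv]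

end Euler

section Integration

variable {F : Type*} [NormedAddCommGroup F] [InnerProductSpace ℝ F]
  [MeasurableSpace E] [BorelSpace E] [FiniteDimensional ℝ E] {μ : Measure E} [μ.IsAddHaarMeasure]

theorem integrable_inner (f g : 𝓢(E, F)) : Integrable (fun x => ⟪f x, g x⟫) μ :=
  (bilinLeftCLM (innerSL ℝ) g.hasTemperateGrowth f).integrable

theorem integrable_mul_inner_lineDerivOp_self (ℓ : E →L[ℝ] ℝ) (v : E) (u : 𝓢(E, F)) :
    Integrable (fun x => ℓ x * ⟪∂_{v} u x, u x⟫) μ := by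
  simpa [smulLeftCLM_apply_apply ℓ.hasTemperateGrowth, real_inner_smul_left] using
    integrable_inner (μ := μ) (smulLeftCLM F ℓ (∂_{v} u)) u

theorem integral_mul_inner_lineDerivOp_self (ℓ : E →L[ℝ] ℝ) (v : E) (u : 𝓢(E, F)) :
    ∫ x, ℓ x * ⟪∂_{v} u x, u x⟫ ∂μ = -(ℓ v / 2) * ∫ x, ⟪u x, u x⟫ ∂μ := by
  have hℓ := ℓ.hasTemperateGrowth
  have ibp := integral_bilinear_lineDerivOp_right_eq_neg_left (μ := μ) (smulLeftCLM F ℓ u) u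
    (innerSL ℝ) v
  have hB : ∀ a b : F, innerSL ℝ a b = ⟪a, b⟫ := fun _ _ => rfl
  simp only [hB, lineDerivOp_smulLeftCLM, add_apply, smul_apply,
    smulLeftCLM_apply_apply hℓ, inner_add_left, real_inner_smul_left] at ibp
  rw [integral_add ((integrable_inner u u).const_mul _)
    (integrable_mul_inner_lineDerivOp_self ℓ v u), integral_const_mul] at ibp
  simp_rw [real_inner_comm (∂_{v} u _)] at ibp
  linarith

theorem integral_inner_euler_self (u : 𝓢(E, F)) :
    ∫ x, ⟪euler u x, u x⟫ ∂μ = -(Module.finrank ℝ E / 2) * ∫ x, ⟪u x, u x⟫ ∂μ := by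
  let b := Module.finBasis ℝ E
  let ℓ : Fin (Module.finrank ℝ E) → E →L[ℝ] ℝ := fun i =>
    .proj i ∘L b.equivFunL.toContinuousLinearMap
  have hℓ : ∀ i, ℓ i (b i) = 1 := fun i => by simp [ℓ]
  have hsum : ∀ x, ⟪euler u x, u x⟫ = ∑ i, ℓ i x * ⟪∂_{b i} u x, u x⟫ := fun x => by
    simp [ℓ, euler_apply_eq_sum b, sum_inner, real_inner_smul_left]
  simp_rw [hsum]
  rw [integral_finsetSum _ fun i _ => integrable_mul_inner_lineDerivOp_self (ℓ i) (b i) u]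
  simp only [integral_mul_inner_lineDerivOp_self, hℓ, Finset.sum_const, Finset.card_univ,
    Fintype.card_fin, nsmul_eq_mul]
  ring

theorem integral_inner_iteratedLineDerivOp_euler {n : ℕ} (m : Fin n → E) (f : 𝓢(E, F)) :
    ∫ x, ⟪∂^{m} (euler f) x, ∂^{m} f x⟫ ∂μ =
      (n - Module.finrank ℝ E / 2) * ∫ x, ⟪∂^{m} f x, ∂^{m} f x⟫ ∂μ := by
  have hpt : ∀ x, ⟪∂^{m} (euler f) x, ∂^{m} f x⟫ =
      ⟪euler (∂^{m} f) x, ∂^{m} f x⟫ + n * ⟪∂^{m} f x, ∂^{m} f x⟫ := fun x => by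
    rw [iteratedLineDerivOp_euler, add_apply, ← Nat.cast_smul_eq_nsmul ℝ, smul_apply,
      inner_add_left, real_inner_smul_left]
  simp_rw [hpt]
  rw [integral_add (integrable_inner _ _) ((integrable_inner _ _).const_mul _),
    integral_const_mul, integral_inner_euler_self]
  ring

end Integration

end SchwartzMap

open SchwartzMap LineDeriv

theorem integral_tInner3_iteratedFDeriv (k : ℕ) (f g : 𝓢(E3, E3)) :
    ∫ y, tInner3 k (iteratedFDeriv ℝ k f y) (iteratedFDeriv ℝ k g y) =
      ∑ e : Fin k → Fin 3, ∫ y, ⟪∂^{fun i => EuclideanSpace.single (e i) (1 : ℝ)} f y,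
        ∂^{fun i => EuclideanSpace.single (e i) (1 : ℝ)} g y⟫ := by
  simp only [tInner3, ← iteratedLineDerivOp_eq_iteratedFDeriv]
  exact integral_finsetSum _ fun e _ => integrable_inner _ _

theorem statement12_general (k : ℕ) (f : SchwartzMap E3 E3) :
    ∫ y : E3,
        tInner3 k (iteratedFDeriv ℝ k (fun z => fderiv ℝ f z z) y) (iteratedFDeriv ℝ k f y) =
      ((k : ℝ) - 3 / 2) * ∫ y : E3, tInner3 k (iteratedFDeriv ℝ k f y) (iteratedFDeriv ℝ k f y) := by
  rw [show (fun z => fderiv ℝ f z z) = ⇑(euler f) from rfl, integral_tInner3_iteratedFDeriv,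
    integral_tInner3_iteratedFDeriv, Finset.mul_sum]
  refine Finset.sum_congr rfl fun e _ => ?_
  rw [integral_inner_iteratedLineDerivOp_euler, finrank_euclideanSpace_fin]
  norm_num

theorem statement12 (k : ℕ) (hk : 1 ≤ k) (f : SchwartzMap E3 E3) :
    ∫ y : E3,
        tInner3 k (iteratedFDeriv ℝ k (fun z => fderiv ℝ f z z) y) (iteratedFDeriv ℝ k f y) =
      ((k : ℝ) - 3 / 2) * ∫ y : E3, tInner3 k (iteratedFDeriv ℝ k f y) (iteratedFDeriv ℝ k f y) :=
  statement12_general k f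
end
end

section
/- Let 1 < p < ∞, let k ≥ 1 be an integer, and let θ : ℝ² → ℝ be a Schwartz function. Then ∫_{ℝ²} ⟨D^k((y·∇)θ)(y), D^k θ(y)⟩·|D^k θ(y)|^{p−2} dy = (k − 2/p)·‖D^k θ‖_{L^p(ℝ²)}^{p}, where D^k g denotes the k-th iterated (total) derivative of g (a tensor-valued function), ⟨·,·⟩ and |·| the pointwise inner product and norm of such tensors, ‖D^k θ‖_{L^p}^p = ∫_{ℝ²} |D^k θ(y)|^p dy, and (y·∇)θ(y) = Σ_{j=1}^{2} y_j ∂_j θ(y). -/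
open MeasureTheory Set

noncomputable section

abbrev E2 := EuclideanSpace ℝ (Fin 2)

/-- The pointwise (Hilbert–Schmidt/Euclidean) inner product of two `k`-tensors on `ℝ²`,
i.e. of two `k`-multilinear maps on `ℝ²` with values in `ℝ`: the sum, over all `k`-tuples of
coordinate directions, of the products of the corresponding entries. -/
noncomputable def tInner2 (k : ℕ)
    (A B : ContinuousMultilinearMap ℝ (fun _ : Fin k => E2) ℝ) : ℝ :=
  ∑ e : Fin k → Fin 2,
    A (fun i => EuclideanSpace.single (e i) 1) * B (fun i => EuclideanSpace.single (e i) 1)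

/-- The pointwise (Hilbert–Schmidt/Euclidean) norm of a `k`-tensor on `ℝ²`. -/
noncomputable def tNorm2 (k : ℕ)
    (A : ContinuousMultilinearMap ℝ (fun _ : Fin k => E2) ℝ) : ℝ :=
  Real.sqrt (tInner2 k A A)

/-!
Differentiation commutes with the Euler operator `y · ∇` up to a zeroth-order term,
`D^k((y · ∇)θ) = (y · ∇) D^k θ + k D^k θ`. Hence, with `g` the coordinate vector of `D^k θ`,
the integrand is `⟪(y · ∇) g, g⟫ |g|^{p-2} + k |g|^p = p⁻¹ (y · ∇)|g|^p + k |g|^p`.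
For integrable `u` on `ℝⁿ` whose gradient decays fast enough, `∫ (y · ∇) u = -n ∫ u`: this is
the derivative at `c = 1` of the scaling identity `∫ u (c y) dy = c⁻ⁿ ∫ u`. With `n = 2` and
`u = |g|^p` this produces the factor `k - 2 / p`.
-/

open scoped ContDiff SchwartzMap LineDeriv
open Module (finrank)

section EulerOperator

variable {E F : Type*} [NormedAddCommGroup E] [NormedSpace ℝ E]
  [NormedAddCommGroup F] [NormedSpace ℝ F]

theorem fderiv_fderiv_apply_self {f : E → F} (hf : ContDiff ℝ 2 f) (z v : E) :
    fderiv ℝ (fun w => fderiv ℝ f w w) z v =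
      fderiv ℝ (fun w => fderiv ℝ f w v) z z + fderiv ℝ f z v := by
  have hf' : Differentiable ℝ (fderiv ℝ f) :=
    (hf.fderiv_right (m := 1) le_rfl).differentiable one_ne_zero
  rw [fderiv_clm_apply (u := fun w => w) (hf' z) differentiableAt_fun_id,
    fderiv_clm_apply (hf' z) (differentiableAt_const v)]
  simp [(hf.contDiffAt.isSymmSndFDerivAt (by simp)) v z, add_comm]

theorem iteratedFDeriv_fderiv_apply_self (k : ℕ) {f : E → F} (hf : ContDiff ℝ ∞ f) (y : E)
    (m : Fin k → E) :
    iteratedFDeriv ℝ k (fun z => fderiv ℝ f z z) y m =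
      fderiv ℝ (fun z => iteratedFDeriv ℝ k f z m) y y + (k : ℝ) • iteratedFDeriv ℝ k f y m := by
  induction k generalizing y with
  | zero => simp
  | succ k ih =>
    have hDk : ContDiff ℝ ∞ (iteratedFDeriv ℝ k f) := hf.iteratedFDeriv_right le_rfl
    have hRk : ContDiff ℝ ∞ (iteratedFDeriv ℝ k (fun z => fderiv ℝ f z z)) :=
      ((hf.fderiv_right le_rfl).clm_apply contDiff_id).iteratedFDeriv_right le_rfl
    set φ : E → F := fun z => iteratedFDeriv ℝ k f z (Fin.tail m)
    have hφ : ContDiff ℝ ∞ φ :=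
      (ContinuousMultilinearMap.apply ℝ (fun _ : Fin k => E) F (Fin.tail m)).contDiff.comp hDk
    have hφd : Differentiable ℝ φ := hφ.differentiable (by simp)
    have hDφ : Differentiable ℝ (fun z => fderiv ℝ φ z z) :=
      ((hφ.fderiv_right (m := ∞) le_rfl).clm_apply contDiff_id).differentiable (by simp)
    have hφ_succ (z : E) : fderiv ℝ φ z (m 0) = iteratedFDeriv ℝ (k + 1) f z m := by
      rw [iteratedFDeriv_succ_apply_left,
        fderiv_continuousMultilinear_apply_const_apply (hDk.differentiable (by simp) z)]
    rw [iteratedFDeriv_succ_apply_left,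
      ← fderiv_continuousMultilinear_apply_const_apply (hRk.differentiable (by simp) y)]
    simp only [ih]
    change fderiv ℝ (fun z => fderiv ℝ φ z z + (k : ℝ) • φ z) y (m 0) = _
    rw [fderiv_fun_add (hDφ y) (by fun_prop), fderiv_fun_const_smul (hφd y), add_apply,
      smul_apply, fderiv_fderiv_apply_self (hφ.of_le (WithTop.coe_le_coe.2 le_top))]
    simp only [hφ_succ]
    push_cast
    module

end EulerOperator

section Scaling

variable {E : Type*} [NormedAddCommGroup E] [NormedSpace ℝ E]

lemma norm_fderiv_smul_apply_le {u : E → ℝ} {C : ℝ} {N : ℕ}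
    (hdecay : ∀ y, (1 + ‖y‖) ^ (N + 1) * ‖fderiv ℝ u y‖ ≤ C) {c : ℝ} (hc : 2⁻¹ ≤ c) (y : E) :
    ‖fderiv ℝ u (c • y) y‖ ≤ 2 ^ (N + 1) * C * ((1 + ‖y‖) ^ N)⁻¹ := by
  have hy : 1 + ‖y‖ ≤ 2 * (1 + ‖c • y‖) := by
    rw [norm_smul, Real.norm_of_nonneg (by linarith)]
    nlinarith [norm_nonneg y]
  rw [le_mul_inv_iff₀ (by positivity)]
  calc ‖fderiv ℝ u (c • y) y‖ * (1 + ‖y‖) ^ N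
      ≤ ‖fderiv ℝ u (c • y)‖ * (1 + ‖y‖) * (1 + ‖y‖) ^ N := by
        gcongr
        exact (ContinuousLinearMap.le_opNorm _ _).trans (by gcongr; linarith)
    _ = (1 + ‖y‖) ^ (N + 1) * ‖fderiv ℝ u (c • y)‖ := by ring
    _ ≤ (2 * (1 + ‖c • y‖)) ^ (N + 1) * ‖fderiv ℝ u (c • y)‖ := by gcongr
    _ = 2 ^ (N + 1) * ((1 + ‖c • y‖) ^ (N + 1) * ‖fderiv ℝ u (c • y)‖) := by
        rw [mul_pow, mul_assoc]
    _ ≤ 2 ^ (N + 1) * C := by gcongr; exact hdecay _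

variable [FiniteDimensional ℝ E] [MeasurableSpace E] [BorelSpace E]
  {μ : Measure E} [μ.IsAddHaarMeasure]

lemma integrable_inv_one_add_norm_pow {N : ℕ} (hN : finrank ℝ E < N) :
    Integrable (fun y : E => ((1 + ‖y‖) ^ N)⁻¹) μ := by
  convert integrable_one_add_norm (μ := μ) (r := N) (mod_cast hN) using 2 with y
  rw [Real.rpow_neg (by positivity), Real.rpow_natCast]

lemma measurable_fderiv_apply_self (u : E → ℝ) : Measurable (fun y => fderiv ℝ u y y) :=
  isBoundedBilinearMap_apply.continuous.measurable.comp
    ((measurable_fderiv ℝ u).prodMk measurable_id)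

theorem integrable_fderiv_apply_self {u : E → ℝ} {C : ℝ} {N : ℕ} (hN : finrank ℝ E < N)
    (hdecay : ∀ y, (1 + ‖y‖) ^ (N + 1) * ‖fderiv ℝ u y‖ ≤ C) :
    Integrable (fun y => fderiv ℝ u y y) μ := by
  refine ((integrable_inv_one_add_norm_pow hN).const_mul (2 ^ (N + 1) * C)).mono'
    (measurable_fderiv_apply_self u).aestronglyMeasurable (.of_forall fun y => ?_)
  simpa using norm_fderiv_smul_apply_le hdecay (c := 1) (by norm_num) y

theorem integral_fderiv_apply_self {u : E → ℝ} (hu : Differentiable ℝ u) (hint : Integrable u μ)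
    {C : ℝ} {N : ℕ} (hN : finrank ℝ E < N)
    (hdecay : ∀ y, (1 + ‖y‖) ^ (N + 1) * ‖fderiv ℝ u y‖ ≤ C) :
    ∫ y, fderiv ℝ u y y ∂μ = -finrank ℝ E * ∫ y, u y ∂μ := by
  set n := finrank ℝ E
  have hball : Metric.ball (1 : ℝ) 2⁻¹ ∈ nhds (1 : ℝ) := Metric.ball_mem_nhds _ (by norm_num)
  have hball_ge {c : ℝ} (hc : c ∈ Metric.ball (1 : ℝ) 2⁻¹) : 2⁻¹ ≤ c := by
    rw [Metric.mem_ball, Real.dist_eq, abs_lt] at hc; linarith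
  have hderiv := (hasDerivAt_integral_of_dominated_loc_of_deriv_le (μ := μ)
    (F := fun c y => u (c • y)) (F' := fun c y => fderiv ℝ u (c • y) y) hball
    (.of_forall fun c => (hu.continuous.comp (continuous_const_smul c)).aestronglyMeasurable)
    (by simpa using hint) (by simpa using (measurable_fderiv_apply_self u).aestronglyMeasurable)
    (.of_forall fun y c hc => norm_fderiv_smul_apply_le hdecay (hball_ge hc) y)
    ((integrable_inv_one_add_norm_pow hN).const_mul (2 ^ (N + 1) * C))
    (.of_forall fun y c _ => by
      have h := (hu (c • y)).hasFDerivAt.comp_hasDerivAt c ((hasDerivAt_id c).smul_const y)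
      rwa [one_smul] at h)).2
  have hscale : HasDerivAt (fun c : ℝ => ∫ y, u (c • y) ∂μ) (-n * ∫ y, u y ∂μ) 1 := by
    have hpow : HasDerivAt (fun c : ℝ => (c ^ n)⁻¹ * ∫ y, u y ∂μ) (-n * ∫ y, u y ∂μ) 1 := by
      simpa using ((hasDerivAt_pow n (1 : ℝ)).inv (by norm_num)).mul_const (∫ y, u y ∂μ)
    refine hpow.congr_of_eventuallyEq (Filter.mem_of_superset hball fun c hc => ?_)
    have hc : 0 < c := lt_of_lt_of_le (by norm_num) (hball_ge hc)
    simp [Measure.integral_comp_smul, abs_of_pos hc, n]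
  simpa using hderiv.unique hscale

end Scaling

section Schwartz

variable {E F : Type*} [NormedAddCommGroup E] [NormedSpace ℝ E]
  [NormedAddCommGroup F] [InnerProductSpace ℝ F]

lemma SchwartzMap.exists_one_add_norm_pow_mul_norm_fderiv_norm_rpow_le (g : 𝓢(E, F)) {p : ℝ}
    (hp : 1 < p) (N : ℕ) :
    ∃ C, ∀ y, (1 + ‖y‖) ^ N * ‖fderiv ℝ (fun x => ‖g x‖ ^ p) y‖ ≤ C := by
  set M := SchwartzMap.seminorm ℝ 0 0 g
  set C := 2 ^ N * (Finset.Iic (N, 1)).sup (fun m => SchwartzMap.seminorm ℝ m.1 m.2) g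
  refine ⟨p * M ^ (p - 1) * C, fun y => ?_⟩
  have hgy : ‖g y‖ ^ (p - 1) ≤ M ^ (p - 1) :=
    Real.rpow_le_rpow (norm_nonneg _) (g.norm_le_seminorm ℝ y) (by linarith)
  have hDg : (1 + ‖y‖) ^ N * ‖fderiv ℝ g y‖ ≤ C := by
    simpa [norm_iteratedFDeriv_one] using
      g.one_add_le_sup_seminorm_apply (𝕜 := ℝ) (m := (N, 1)) le_rfl le_rfl y
  calc (1 + ‖y‖) ^ N * ‖fderiv ℝ (fun x => ‖g x‖ ^ p) y‖
      ≤ (1 + ‖y‖) ^ N * (p * ‖g y‖ ^ (p - 1) * ‖fderiv ℝ g y‖) := by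
        gcongr; exact norm_fderiv_norm_rpow_le g.differentiable hp
    _ = p * ‖g y‖ ^ (p - 1) * ((1 + ‖y‖) ^ N * ‖fderiv ℝ g y‖) := by ring
    _ ≤ p * M ^ (p - 1) * C := by gcongr

variable [FiniteDimensional ℝ E] [MeasurableSpace E] [BorelSpace E]
  {μ : Measure E} [μ.IsAddHaarMeasure]

lemma SchwartzMap.integrable_norm_rpow (g : 𝓢(E, F)) {p : ℝ} (hp : 0 < p) :
    Integrable (fun y => ‖g y‖ ^ p) μ := by
  simpa [hp.le] using (g.memLp (ENNReal.ofReal p) μ).integrable_norm_rpow (by simpa using hp)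
    ENNReal.ofReal_ne_top

theorem SchwartzMap.integrable_fderiv_norm_rpow_apply_self (g : 𝓢(E, F)) {p : ℝ} (hp : 1 < p) :
    Integrable (fun y => fderiv ℝ (fun x => ‖g x‖ ^ p) y y) μ := by
  obtain ⟨C, hC⟩ := g.exists_one_add_norm_pow_mul_norm_fderiv_norm_rpow_le hp (finrank ℝ E + 2)
  exact integrable_fderiv_apply_self (lt_add_one _) hC

theorem SchwartzMap.integral_fderiv_norm_rpow_apply_self (g : 𝓢(E, F)) {p : ℝ} (hp : 1 < p) :
    ∫ y, fderiv ℝ (fun x => ‖g x‖ ^ p) y y ∂μ = -finrank ℝ E * ∫ y, ‖g y‖ ^ p ∂μ := by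
  obtain ⟨C, hC⟩ := g.exists_one_add_norm_pow_mul_norm_fderiv_norm_rpow_le hp (finrank ℝ E + 2)
  exact integral_fderiv_apply_self (g.differentiable.norm_rpow hp)
    (g.integrable_norm_rpow (by linarith)) (lt_add_one _) hC

end Schwartz

lemma inner_add_smul_mul_norm_rpow {F : Type*} [NormedAddCommGroup F] [InnerProductSpace ℝ F]
    (x v : F) (c : ℝ) {p : ℝ} (hp : p ≠ 0) :
    inner ℝ (v + c • x) x * ‖x‖ ^ (p - 2) =
      p⁻¹ * ((p * ‖x‖ ^ (p - 2)) • innerSL ℝ x) v + c * ‖x‖ ^ p := by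
  have hsq : ‖x‖ ^ 2 * ‖x‖ ^ (p - 2) = ‖x‖ ^ p := by
    rw [← Real.rpow_natCast, ← Real.rpow_add' (norm_nonneg x) (by simpa)]
    norm_num
  simp only [inner_add_left, real_inner_smul_left, real_inner_self_eq_norm_sq, smul_apply,
    innerSL_apply_apply, smul_eq_mul, real_inner_comm x v, ← hsq]
  field_simp

lemma EuclideanSpace.fderiv_apply {E ι : Type*} [NormedAddCommGroup E] [NormedSpace ℝ E]
    [Fintype ι] {f : E → EuclideanSpace ℝ ι} {y : E} (hf : DifferentiableAt ℝ f y) (i : ι)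
    (v : E) :
    fderiv ℝ (fun z => f z i) y v = fderiv ℝ f y v i :=
  congrArg (· v) ((EuclideanSpace.proj i).hasFDerivAt.comp y hf.hasFDerivAt).fderiv

def basisTuple (k : ℕ) (e : Fin k → Fin 2) : Fin k → E2 :=
  fun i => EuclideanSpace.single (e i) 1

def tensorCoords (k : ℕ) (A : ContinuousMultilinearMap ℝ (fun _ : Fin k => E2) ℝ) :
    EuclideanSpace ℝ (Fin k → Fin 2) :=
  WithLp.toLp 2 fun e => A (basisTuple k e)

lemma tInner2_eq_inner (k : ℕ) (A B : ContinuousMultilinearMap ℝ (fun _ : Fin k => E2) ℝ) :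
    tInner2 k A B = inner ℝ (tensorCoords k A) (tensorCoords k B) := by
  rw [tInner2, PiLp.inner_apply]
  exact Finset.sum_congr rfl fun e _ => mul_comm _ _

lemma tNorm2_eq_norm (k : ℕ) (A : ContinuousMultilinearMap ℝ (fun _ : Fin k => E2) ℝ) :
    tNorm2 k A = ‖tensorCoords k A‖ := by
  rw [tNorm2, tInner2_eq_inner, real_inner_self_eq_norm_sq, Real.sqrt_sq (norm_nonneg _)]

/-- The map `y ↦ tensorCoords k (D^k θ y)`, assembled from the Schwartz maps
`∂^{basisTuple k e} θ` so that it is visibly Schwartz. -/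
def tensorCoordsSchwartz (k : ℕ) (θ : 𝓢(E2, ℝ)) : 𝓢(E2, EuclideanSpace ℝ (Fin k → Fin 2)) :=
  ∑ e, SchwartzMap.postcompCLM
    (ContinuousLinearMap.toSpanSingleton ℝ (EuclideanSpace.single e 1)) (∂^{basisTuple k e} θ)

lemma tensorCoordsSchwartz_apply (k : ℕ) (θ : 𝓢(E2, ℝ)) (y : E2) :
    tensorCoordsSchwartz k θ y = tensorCoords k (iteratedFDeriv ℝ k θ y) := by
  ext e
  simp [tensorCoordsSchwartz, tensorCoords, SchwartzMap.iteratedLineDerivOp_eq_iteratedFDeriv,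
    Pi.single_apply]

lemma tensorCoords_iteratedFDeriv_fderiv_apply_self (k : ℕ) (θ : 𝓢(E2, ℝ)) (y : E2) :
    tensorCoords k (iteratedFDeriv ℝ k (fun z => fderiv ℝ θ z z) y) =
      fderiv ℝ (tensorCoordsSchwartz k θ) y y + (k : ℝ) • tensorCoordsSchwartz k θ y := by
  ext e
  simp only [tensorCoords, iteratedFDeriv_fderiv_apply_self k (θ.smooth ⊤), PiLp.add_apply,
    PiLp.smul_apply, smul_eq_mul, tensorCoordsSchwartz_apply,
    ← EuclideanSpace.fderiv_apply (tensorCoordsSchwartz k θ).differentiableAt]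

theorem statement13_general (p : ℝ) (hp1 : 1 < p) (k : ℕ) (θ : SchwartzMap E2 ℝ) :
    ∫ y : E2,
        tInner2 k (iteratedFDeriv ℝ k (fun z => fderiv ℝ θ z z) y) (iteratedFDeriv ℝ k θ y) *
          tNorm2 k (iteratedFDeriv ℝ k θ y) ^ (p - 2) =
      ((k : ℝ) - 2 / p) * ∫ y : E2, tNorm2 k (iteratedFDeriv ℝ k θ y) ^ p := by
  set g := tensorCoordsSchwartz k θ
  have hpoint (y : E2) :
      tInner2 k (iteratedFDeriv ℝ k (fun z => fderiv ℝ θ z z) y) (iteratedFDeriv ℝ k θ y) *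
          tNorm2 k (iteratedFDeriv ℝ k θ y) ^ (p - 2) =
        p⁻¹ * fderiv ℝ (fun x => ‖g x‖ ^ p) y y + k * ‖g y‖ ^ p := by
    rw [tInner2_eq_inner, tNorm2_eq_norm, tensorCoords_iteratedFDeriv_fderiv_apply_self,
      ← tensorCoordsSchwartz_apply, g.differentiable.fderiv_norm_rpow hp1]
    exact inner_add_smul_mul_norm_rpow _ _ _ (by positivity)
  simp_rw [hpoint, tNorm2_eq_norm, ← tensorCoordsSchwartz_apply]
  rw [integral_add ((g.integrable_fderiv_norm_rpow_apply_self hp1).const_mul _)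
      ((g.integrable_norm_rpow (by positivity)).const_mul _),
    integral_const_mul, integral_const_mul, g.integral_fderiv_norm_rpow_apply_self hp1,
    finrank_euclideanSpace_fin]
  field_simp
  ring

theorem statement13 (p : ℝ) (hp1 : 1 < p) (k : ℕ) (hk : 1 ≤ k) (θ : SchwartzMap E2 ℝ) :
    ∫ y : E2,
        tInner2 k (iteratedFDeriv ℝ k (fun z => fderiv ℝ θ z z) y) (iteratedFDeriv ℝ k θ y) *
          tNorm2 k (iteratedFDeriv ℝ k θ y) ^ (p - 2) =
      ((k : ℝ) - 2 / p) * ∫ y : E2, tNorm2 k (iteratedFDeriv ℝ k θ y) ^ p :=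
  statement13_general p hp1 k θ
end
end
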